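/- arXiv:2604.14763 — 2 statements merged into one kernel-verified Lean document; each statement's English description precedes it below -/
import Mathlib

section
/- Let G be a claw-free split graph with vertex set partitioned into a maximum clique K and an independent set I. Then G is Hamiltonian if and only if G is 2-connected. -/
open SimpleGraph

/-- `G` is `K_{1,r}`-free: no vertex has `r` pairwise nonadjacent neighbors. -/
def K1rFree {V : Type*} (G : SimpleGraph V) (r : ℕ) : Prop :=
  ¬ ∃ (v : V) (s : Finset V), s.card = r ∧ (∀ u ∈ s, G.Adj v u) ∧
      (s : Set V).Pairwise fun a b => ¬ G.Adj a b

/-- `(K, I)` is a partition of the vertex set of `G` into a clique `K`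
and an independent set `I`. -/
def IsSplitPartition {V : Type*} (G : SimpleGraph V) (K I : Set V) : Prop :=
  K ∪ I = Set.univ ∧ Disjoint K I ∧ G.IsClique K ∧ I.Pairwise fun a b => ¬ G.Adj a b

/-- `G` is a split graph of type `(K, I)`: moreover `K` is a maximum clique. -/
def IsSplitType {V : Type*} [Fintype V] (G : SimpleGraph V) (K I : Finset V) : Prop :=
  IsSplitPartition G ↑K ↑I ∧ ∀ s : Finset V, G.IsClique (s : Set V) → s.card ≤ K.card

/-- `G` contains a cycle through all its vertices. -/
def IsHamiltonianGraph {V : Type*} [DecidableEq V] (G : SimpleGraph V) : Prop :=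
  ∃ (v : V) (c : G.Walk v v), c.IsHamiltonianCycle

/-- `G` has more than `k` vertices and remains connected after deleting
any fewer than `k` vertices. -/
def KConnected {V : Type*} [Fintype V] (G : SimpleGraph V) (k : ℕ) : Prop :=
  k < Fintype.card V ∧ ∀ S : Set V, S.ncard < k → (G.induce Sᶜ).Connected

/-- every vertex lies on a triangle, and every non-Hamiltonian cycle can be
extended to a cycle on one more vertex containing all its vertices. -/
def FullyCycleExtendable {V : Type*} [DecidableEq V] (G : SimpleGraph V) : Prop :=
  (∀ v : V, ∃ c : G.Walk v v, c.IsCycle ∧ c.length = 3) ∧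
  ∀ (v : V) (c : G.Walk v v), c.IsCycle → ¬ (∀ u : V, u ∈ c.support) →
    ∃ (w : V) (c' : G.Walk w w), c'.IsCycle ∧
      c.support.toFinset ⊆ c'.support.toFinset ∧
      c'.support.toFinset.card = c.support.toFinset.card + 1

/-- between any two distinct vertices there is a Hamiltonian path. -/
def HamiltonConnected {V : Type*} [DecidableEq V] (G : SimpleGraph V) : Prop :=
  ∀ u v : V, u ≠ v → ∃ p : G.Walk u v, p.IsHamiltonian

/-- the largest real eigenvalue of a real square matrix. -/
noncomputable def specRad {V : Type*} [Fintype V] (A : Matrix V V ℝ) : ℝ :=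
  sSup {μ : ℝ | Module.End.HasEigenvalue A.mulVecLin μ}

open Classical in
/-- the real adjacency matrix of `G`. -/
noncomputable def adjMat {V : Type*} [Fintype V] (G : SimpleGraph V) : Matrix V V ℝ :=
  Matrix.of fun i j => if G.Adj i j then 1 else 0

/-- the spectral radius of a graph: the largest eigenvalue of its adjacency matrix. -/
noncomputable def rho {V : Type*} [Fintype V] (G : SimpleGraph V) : ℝ :=
  specRad (adjMat G)

/-- `x` is the Perron vector of `G` : a unit positive eigenvector of the
adjacency matrix for the eigenvalue `rho G`. -/
def IsPerronVector {V : Type*} [Fintype V] (G : SimpleGraph V) (x : V → ℝ) : Prop :=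
  (∀ v, 0 < x v) ∧ (∑ v, x v ^ 2 = 1) ∧ (adjMat G).mulVec x = rho G • x

/-!
A Hamiltonian cycle remains a spanning path after one vertex is deleted, so Hamiltonian graphs
are 2-connected.

Conversely, let `G` be 2-connected. Every vertex outside `K` then has two neighbours, all of them
in `K`, and, `K` being a maximum clique, also a non-neighbour in `K`. Any path which starts and
ends in `K` and visits every vertex outside `K` closes up through the clique to a Hamiltonian
cycle. If no two vertices outside `K` share a neighbour, such a path is obtained by threading
each of them between two of its own neighbours. Otherwise, say `x` and `y` share the neighbour
`u`; claw-freeness at `u` makes every vertex of `K` adjacent to `x` or to `y`. A third vertex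
`c` outside `K` shares a neighbour with `x` or `y`, and then, through a non-neighbour in `K` of
the other one, with both; so every vertex of `K` sees at least two of `x`, `y`, `c`, and, not
being a claw centre, exactly two. For the same reason no fourth vertex lies outside `K`. The
cycle then runs through `x`, the common neighbours of `x` and `y`, `y`, those of `y` and `c`, `c`,
and those of `c` and `x`.
-/

theorem List.Nodup.head_ne_getLast {α : Type*} {l : List α} (hl : l.Nodup)
    (h2 : 2 ≤ l.length) (hne : l ≠ []) : l.head hne ≠ l.getLast hne := by
  rcases l with _ | ⟨a, _ | ⟨b, t⟩⟩
  · simp at h2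
  · simp at h2
  · rw [List.head_cons, List.getLast_cons_cons]
    exact fun h => (List.nodup_cons.1 hl).1 (h ▸ List.getLast_mem _)

section Hamiltonian

variable {V : Type*} {G : SimpleGraph V}

theorem SimpleGraph.IsClique.isChain {s : Set V} (hs : G.IsClique s) {l : List V}
    (hl : l.Nodup) (hls : ∀ x ∈ l, x ∈ s) : l.IsChain G.Adj :=
  (hl.pairwise_of_forall_ne fun a ha b hb hab => hs (hls a ha) (hls b hb) hab).isChain

theorem SimpleGraph.IsClique.isChain_cons_append_cons {s : Set V} (hs : G.IsClique s)
    {a b : V} {S rest : List V} (hS : S.Nodup) (hSs : ∀ z ∈ S, z ∈ s) (hSne : S ≠ [])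
    (ha : ∀ z ∈ S, G.Adj a z) (hb : ∀ z ∈ S, G.Adj z b) (hrest : (b :: rest).IsChain G.Adj) :
    (a :: (S ++ b :: rest)).IsChain G.Adj := by
  refine List.isChain_cons.2 ⟨fun z hz => ha z ?_, (hs.isChain hS hSs).append hrest ?_⟩
  · rw [List.head?_append_of_ne_nil _ hSne] at hz
    exact List.mem_of_mem_head? hz
  · rintro z hz _ ⟨⟩
    exact hb z (List.mem_of_mem_getLast? hz)

theorem KConnected.exists_adj_adj [Fintype V] (h : KConnected G 2) (a : V) :
    ∃ x y, x ≠ y ∧ G.Adj a x ∧ G.Adj a y := by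
  classical
  by_contra! hcon
  obtain ⟨x₀, hx₀⟩ : ∃ x₀, G.neighborSet a ⊆ {x₀} := by
    rcases (G.neighborSet a).eq_empty_or_nonempty with h | ⟨z, hz⟩
    · exact ⟨a, by simp [h]⟩
    · exact ⟨z, fun w hw => by_contra fun hwz => hcon w z hwz hw hz⟩
  obtain ⟨b, -, hb⟩ := Finset.exists_mem_notMem_of_card_lt_card (s := {a, x₀})
    (t := Finset.univ) (Finset.card_le_two.trans_lt h.1)
  simp only [Finset.mem_insert, Finset.mem_singleton, not_or] at hb
  have hS : (G.neighborSet a).ncard < 2 := (Set.ncard_le_ncard hx₀).trans_lt (by simp)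
  -- `a` is isolated once its neighbours are deleted
  obtain ⟨p⟩ := (h.2 _ hS).preconnected ⟨a, by simp⟩ ⟨b, fun hb' => hb.2 (hx₀ hb')⟩
  have hnil : ¬p.Nil := Walk.not_nil_of_ne fun h => hb.1 (congrArg Subtype.val h).symm
  exact p.snd.2 (Walk.adj_snd hnil)

variable [DecidableEq V]

theorem SimpleGraph.Walk.IsHamiltonian.isHamiltonianCycle_cons {u v : V} {p : G.Walk u v}
    (hp : p.IsHamiltonian) (h : G.Adj v u) (hlen : 2 ≤ p.length) :
    (Walk.cons h p).IsHamiltonianCycle := by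
  refine ⟨?_, by simpa [Walk.IsHamiltonian, Walk.support_copy] using hp⟩
  rw [Walk.isCycle_iff_isPath_tail_and_le_length]
  simpa [Walk.isPath_copy, hp.isPath] using hlen

theorem SimpleGraph.Walk.IsHamiltonian.connected_induce_compl_singleton {u v : V}
    {p : G.Walk u v} (hp : p.IsHamiltonian) (huv : u ≠ v) : (G.induce {v}ᶜ).Connected := by
  have hsupp := p.dropLast_support_concat
  have hnd : (p.support.dropLast ++ [v]).Nodup := by
    rw [hsupp]
    exact hp.isPath.support_nodup
  have hset : ({v}ᶜ : Set V) = {x | x ∈ p.dropLast.support} := by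
    ext x
    rw [Walk.support_dropLast (Walk.not_nil_of_ne huv), Set.mem_ofPred_eq,
      Set.mem_compl_singleton_iff]
    refine ⟨fun hx => ?_, fun hx hxv => List.disjoint_of_nodup_append hnd hx (by simp [hxv])⟩
    have := hp.mem_support x
    rw [← hsupp, List.mem_append, List.mem_singleton] at this
    exact this.resolve_right hx
  rw [hset]
  exact p.dropLast.connected_induce_support

theorem IsHamiltonianGraph.kConnected_two [Fintype V] (h : IsHamiltonianGraph G) :
    KConnected G 2 := by
  obtain ⟨a, c, hc⟩ := h
  refine ⟨by have := hc.isCycle.three_le_length; have := hc.length_eq; omega, fun S hS => ?_⟩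
  obtain rfl | ⟨v, rfl⟩ := (Set.ncard_le_one_iff_eq (Set.toFinite S)).1 (by omega)
  · have hset : (∅ᶜ : Set V) = {x | x ∈ c.support} := by ext x; simp [hc.mem_support x]
    rw [hset]
    exact c.connected_induce_support
  · have hc' := (Walk.isHamiltonianCycle_rotate (hc.mem_support v)).2 hc
    exact hc'.isHamiltonian_tail.connected_induce_compl_singleton
      (G.ne_of_adj (Walk.adj_snd hc'.not_nil)).symm

theorem isHamiltonianGraph_of_isChain {L : List V} (hne : L ≠ []) (hnd : L.Nodup)
    (hch : L.IsChain G.Adj) (hclose : G.Adj (L.getLast hne) (L.head hne))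
    (hlen : 3 ≤ L.length) (hmem : ∀ v, v ∈ L) : IsHamiltonianGraph G := by
  have hp : (Walk.ofSupport L hne hch).IsPath := by
    rw [Walk.isPath_def, Walk.support_ofSupport]
    exact hnd
  refine ⟨_, _, (hp.isHamiltonian_of_mem (by simpa using hmem)).isHamiltonianCycle_cons hclose ?_⟩
  rw [Walk.length_ofSupport]
  omega

theorem isHamiltonianGraph_of_isChain_of_isClique [Fintype V] {K : Finset V}
    (hK : G.IsClique (K : Set V)) (hcard : 2 < Fintype.card V) {L : List V} (hnd : L.Nodup)
    (hch : L.IsChain G.Adj) (hhead : ∀ x ∈ L.head?, x ∈ K) (hlast : ∀ x ∈ L.getLast?, x ∈ K)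
    (hmem : ∀ v ∉ K, v ∈ L) : IsHamiltonianGraph G := by
  set R := (K.filter (· ∉ L)).toList
  have hR : ∀ x ∈ R, x ∈ K ∧ x ∉ L := by simp [R]
  have hRK : ∀ x ∈ R, x ∈ (K : Set V) := fun x hx => (hR x hx).1
  have hnd' : (L ++ R).Nodup :=
    hnd.append (Finset.nodup_toList _) fun x hxL hxR => (hR x hxR).2 hxL
  have hmem' : ∀ v, v ∈ L ++ R := fun v => by
    by_cases hv : v ∈ K
    · by_cases hvL : v ∈ L
      · exact List.mem_append_left _ hvL
      · exact List.mem_append_right _ (by simp [R, hv, hvL])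
    · exact List.mem_append_left _ (hmem v hv)
  have hlen : (L ++ R).length = Fintype.card V := by
    rw [← List.toFinset_card_of_nodup hnd', ← Finset.card_univ]
    exact congrArg Finset.card (Finset.eq_univ_of_forall fun v => List.mem_toFinset.2 (hmem' v))
  have hne : L ++ R ≠ [] := List.ne_nil_of_length_pos (by omega)
  have hch' : (L ++ R).IsChain G.Adj := hch.append (hK.isChain (Finset.nodup_toList _) hRK)
    fun x hx y hy => hK (hlast x hx) (hRK y (List.mem_of_mem_head? hy))
      fun hxy => (hR y (List.mem_of_mem_head? hy)).2 (hxy ▸ List.mem_of_mem_getLast? hx)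
  have hhead' : ∀ x ∈ (L ++ R).head?, x ∈ K := fun x hx => by
    rw [List.head?_append, Option.mem_def, Option.or_eq_some_iff] at hx
    rcases hx with hx | ⟨-, hx⟩
    exacts [hhead x hx, (hR x (List.mem_of_mem_head? hx)).1]
  have hlast' : ∀ x ∈ (L ++ R).getLast?, x ∈ K := fun x hx => by
    rw [List.getLast?_append, Option.mem_def, Option.or_eq_some_iff] at hx
    rcases hx with hx | ⟨-, hx⟩
    exacts [(hR x (List.mem_of_mem_getLast? hx)).1, hlast x hx]
  refine isHamiltonianGraph_of_isChain hne hnd' hch'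
    (hK ?_ ?_ (hnd'.head_ne_getLast ?_ hne).symm) (by omega) hmem'
  exacts [hlast' _ (List.getLast_mem_getLast? hne), hhead' _ (List.head_mem_head? hne), by omega]

theorem isHamiltonianGraph_of_disjoint_neighbors [Fintype V] {K : Finset V}
    (hK : G.IsClique (K : Set V)) (hcard : 2 < Fintype.card V)
    (hnbr : ∀ a ∉ K, ∃ u ∈ K, ∃ v ∈ K, u ≠ v ∧ G.Adj a u ∧ G.Adj a v)
    (hdisj : ∀ a ∉ K, ∀ b ∉ K, a ≠ b → ∀ z, G.Adj a z → ¬G.Adj b z) :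
    IsHamiltonianGraph G := by
  choose! f hf g hg hfg haf hag using hnbr
  have hne : ∀ a ∉ K, ∀ b ∉ K, a ≠ b → ∀ z w, G.Adj a z → G.Adj b w → z ≠ w :=
    fun a ha b hb hab z w hz hw hzw => hdisj a ha b hb hab z hz (hzw ▸ hw)
  have hout : ∀ a ∈ Kᶜ.toList, a ∉ K := by simp
  let B : V → List V := fun a => [f a, a, g a]
  refine isHamiltonianGraph_of_isChain_of_isClique hK hcard (L := Kᶜ.toList.flatMap B)
    ?_ ?_ ?_ ?_ fun v hv => List.mem_flatMap.2 ⟨v, by simpa using hv, by simp [B]⟩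
  · refine List.nodup_flatMap.2 ⟨fun a ha => ?_, (Finset.nodup_toList _).pairwise_of_forall_ne
      fun a ha b hb hab => ?_⟩
    · have := hout a ha
      simp only [B, List.nodup_cons, List.mem_cons, List.not_mem_nil]
      grind
    · have := hne a (hout a ha) b (hout b hb) hab
      simp only [B, Function.onFun, List.disjoint_cons_left, List.disjoint_nil_left,
        List.mem_cons, List.not_mem_nil]
      grind
  · rw [List.flatMap, List.isChain_flatten (by simp [B]), List.isChain_map]
    refine ⟨by simpa [B] using fun a ha => ⟨(haf a ha).symm, hag a ha⟩, ?_⟩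
    refine ((Finset.nodup_toList _).pairwise_of_forall_ne fun a ha b hb hab => ?_).isChain
    simp only [B, List.getLast?_cons_cons, List.getLast?_singleton, List.head?_cons,
      Option.mem_def, Option.some.injEq, forall_eq']
    have ha' := hout a ha
    have hb' := hout b hb
    exact hK (hg a ha') (hf b hb') (hne a ha' b hb' hab _ _ (hag a ha') (haf b hb'))
  · intro x hx
    rw [List.head?_flatMap] at hx
    obtain ⟨a, ha, hax⟩ := List.exists_of_findSome?_eq_some hx
    simp only [B, List.head?_cons, Option.some.injEq] at hax
    exact hax ▸ hf a (hout a ha)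
  · intro x hx
    rw [List.getLast?_flatMap] at hx
    obtain ⟨a, ha, hax⟩ := List.exists_of_findSome?_eq_some hx
    simp only [B, List.getLast?_cons_cons, List.getLast?_singleton, Option.some.injEq] at hax
    exact hax ▸ hg a (hout a (List.mem_reverse.1 ha))

theorem isHamiltonianGraph_of_two_outside [Fintype V] {K : Finset V}
    (hK : G.IsClique (K : Set V)) (hcard : 2 < Fintype.card V) {x y : V} (hx : x ∉ K)
    (hy : y ∉ K) (hxy : x ≠ y) (hout : ∀ v ∉ K, v = x ∨ v = y)
    (hu : ∃ u, G.Adj x u ∧ G.Adj y u) (hw : ∃ w ∈ K, G.Adj y w ∧ ¬G.Adj x w)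
    (hw' : ∃ w' ∈ K, G.Adj x w' ∧ ¬G.Adj y w') : IsHamiltonianGraph G := by
  obtain ⟨u, hxu, hyu⟩ := hu
  obtain ⟨w, hwK, hyw, hxw⟩ := hw
  obtain ⟨w', hw'K, hxw', hyw'⟩ := hw'
  refine isHamiltonianGraph_of_isChain_of_isClique hK hcard (L := [w, y, u, x, w'])
    ?_ ?_ (by simpa using hwK) (by simpa using hw'K)
    fun v hv => by rcases hout v hv with rfl | rfl <;> simp
  · simp only [List.nodup_cons, List.mem_cons, List.not_mem_nil]
    grind [SimpleGraph.Adj.ne]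
  · simp [hyw.symm, hyu, hxu.symm, hxw']

theorem isHamiltonianGraph_of_three_outside {K : Finset V}
    (hK : G.IsClique (K : Set V)) {x y c : V} (hx : x ∉ K) (hy : y ∉ K) (hc : c ∉ K)
    (hxy : x ≠ y) (hxc : x ≠ c) (hyc : y ≠ c) (hout : ∀ v ∉ K, v = x ∨ v = y ∨ v = c)
    (htwo : ∀ z ∈ K, G.Adj x z ∧ G.Adj y z ∨ G.Adj y z ∧ G.Adj c z ∨ G.Adj c z ∧ G.Adj x z)
    (hthree : ∀ z ∈ K, ¬(G.Adj x z ∧ G.Adj y z ∧ G.Adj c z))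
    (hxy' : ∃ z ∈ K, G.Adj x z ∧ G.Adj y z) (hyc' : ∃ z ∈ K, G.Adj y z ∧ G.Adj c z)
    (hcx' : ∃ z ∈ K, G.Adj c z ∧ G.Adj x z) : IsHamiltonianGraph G := by
  classical
  let S : V → V → List V := fun a b => (K.filter fun z => G.Adj a z ∧ G.Adj b z).toList
  have hS : ∀ a b z, z ∈ S a b ↔ z ∈ K ∧ G.Adj a z ∧ G.Adj b z := by simp [S]
  have hSnd : ∀ a b, (S a b).Nodup := fun _ _ => Finset.nodup_toList _
  have hsector : ∀ a b, (∃ z ∈ K, G.Adj a z ∧ G.Adj b z) → ∀ rest,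
      (b :: rest).IsChain G.Adj → (a :: (S a b ++ b :: rest)).IsChain G.Adj := by
    rintro a b ⟨z, hz⟩ rest hrest
    refine hK.isChain_cons_append_cons (hSnd a b) (fun z hz => ((hS a b z).1 hz).1) ?_
      (fun z hz => ((hS a b z).1 hz).2.1) (fun z hz => ((hS a b z).1 hz).2.2.symm) hrest
    exact List.ne_nil_of_mem ((hS a b z).2 hz)
  let L := x :: (S x y ++ y :: (S y c ++ c :: S c x))
  have hch : (L ++ [x]).IsChain G.Adj := by
    simpa [L] using hsector x y hxy' _ (hsector y c hyc' _ (hsector c x hcx' [] (.singleton x)))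
  refine isHamiltonianGraph_of_isChain (L := L) (List.cons_ne_nil _ _) ?_ hch.left_of_append
    ((List.isChain_append.1 hch).2.2 _ (List.getLast_mem_getLast? _) x rfl)
    (by simp [L]; omega) fun v => ?_
  · simp only [L, List.nodup_cons, List.nodup_append, List.mem_append, List.mem_cons, hS, hSnd,
      true_and]
    grind [SimpleGraph.Adj.ne]
  · simp only [L, List.mem_cons, List.mem_append, hS]
    grind

end Hamiltonian

section Split

variable {V : Type*} {G : SimpleGraph V} {K I : Finset V}

theorem K1rFree.adj_or_adj_or_adj (hclaw : K1rFree G 3) {v a b c : V} (hab : a ≠ b)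
    (hac : a ≠ c) (hbc : b ≠ c) (ha : G.Adj v a) (hb : G.Adj v b) (hc : G.Adj v c) :
    G.Adj a b ∨ G.Adj a c ∨ G.Adj b c := by
  classical
  by_contra! h
  refine hclaw ⟨v, {a, b, c}, Finset.card_eq_three.2 ⟨a, b, c, hab, hac, hbc, rfl⟩,
    by simp [ha, hb, hc], ?_⟩
  simp [Set.pairwise_insert, G.adj_comm, h]

theorem IsSplitPartition.isClique (hs : IsSplitPartition G K I) : G.IsClique (K : Set V) :=
  hs.2.2.1

theorem IsSplitPartition.mem_right_of_notMem_left (hs : IsSplitPartition G K I) {v : V}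
    (hv : v ∉ K) : v ∈ I := by
  have : v ∈ (K : Set V) ∪ I := hs.1 ▸ Set.mem_univ v
  simpa [hv] using this

theorem IsSplitPartition.not_adj_of_notMem_left (hs : IsSplitPartition G K I) {u v : V}
    (hu : u ∉ K) (hv : v ∉ K) : ¬G.Adj u v := fun h =>
  hs.2.2.2 (hs.mem_right_of_notMem_left hu) (hs.mem_right_of_notMem_left hv) h.ne h

theorem IsSplitPartition.mem_left_of_adj (hs : IsSplitPartition G K I) {u v : V} (hu : u ∉ K)
    (h : G.Adj u v) : v ∈ K :=
  by_contra fun hv => hs.not_adj_of_notMem_left hu hv h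

theorem IsSplitPartition.false_of_adj_three (hs : IsSplitPartition G K I)
    (hclaw : K1rFree G 3) {v a b c : V} (ha : a ∉ K) (hb : b ∉ K) (hc : c ∉ K) (hab : a ≠ b)
    (hac : a ≠ c) (hbc : b ≠ c) (hva : G.Adj v a) (hvb : G.Adj v b) (hvc : G.Adj v c) :
    False := by
  rcases hclaw.adj_or_adj_or_adj hab hac hbc hva hvb hvc with h | h | h
  exacts [hs.not_adj_of_notMem_left ha hb h, hs.not_adj_of_notMem_left ha hc h,
    hs.not_adj_of_notMem_left hb hc h]

theorem IsSplitPartition.adj_or_adj_of_adj_of_adj (hs : IsSplitPartition G K I)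
    (hclaw : K1rFree G 3) {x y u w : V} (hx : x ∉ K) (hy : y ∉ K) (hxy : x ≠ y)
    (hxu : G.Adj x u) (hyu : G.Adj y u) (hw : w ∈ K) : G.Adj x w ∨ G.Adj y w := by
  by_contra! h
  have huw : u ≠ w := fun e => h.1 (e ▸ hxu)
  rcases hclaw.adj_or_adj_or_adj hxy (fun e => hx (e ▸ hw)) (fun e => hy (e ▸ hw)) hxu.symm
    hyu.symm (hs.isClique (hs.mem_left_of_adj hx hxu) hw huw) with h' | h' | h'
  exacts [hs.not_adj_of_notMem_left hx hy h', h.1 h', h.2 h']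

theorem IsSplitPartition.adj_or_adj_of_third (hs : IsSplitPartition G K I)
    (hclaw : K1rFree G 3) {x y c z : V} (hx : x ∉ K) (hy : y ∉ K) (hc : c ∉ K) (hxc : x ≠ c)
    (hyc : y ≠ c) (hcover : ∀ w ∈ K, G.Adj x w ∨ G.Adj y w) (hcz : G.Adj c z)
    (hmiss : ∃ w ∈ K, ¬G.Adj y w) {w : V} (hw : w ∈ K) : G.Adj x w ∨ G.Adj c w := by
  rcases hcover z (hs.mem_left_of_adj hc hcz) with hxz | hyz
  · exact hs.adj_or_adj_of_adj_of_adj hclaw hx hc hxc hxz hcz hw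
  · obtain ⟨w₀, hw₀, hyw₀⟩ := hmiss
    have hcw₀ := (hs.adj_or_adj_of_adj_of_adj hclaw hy hc hyc hyz hcz hw₀).resolve_left hyw₀
    exact hs.adj_or_adj_of_adj_of_adj hclaw hx hc hxc ((hcover w₀ hw₀).resolve_right hyw₀)
      hcw₀ hw

theorem IsSplitPartition.eq_or_eq_or_eq (hs : IsSplitPartition G K I) (hclaw : K1rFree G 3)
    {x y c : V} (hx : x ∉ K) (hy : y ∉ K) (hc : c ∉ K) (hxy : x ≠ y) (hxc : x ≠ c)
    (hyc : y ≠ c)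
    (htwo : ∀ z ∈ K, G.Adj x z ∧ G.Adj y z ∨ G.Adj y z ∧ G.Adj c z ∨ G.Adj c z ∧ G.Adj x z)
    {d z : V} (hd : d ∉ K) (hdz : G.Adj d z) : d = x ∨ d = y ∨ d = c := by
  by_contra! hne
  obtain ⟨hdx, hdy, hdc⟩ := hne
  rcases htwo z (hs.mem_left_of_adj hd hdz) with ⟨h₁, h₂⟩ | ⟨h₁, h₂⟩ | ⟨h₁, h₂⟩
  · exact hs.false_of_adj_three hclaw hx hy hd hxy hdx.symm hdy.symm h₁.symm h₂.symm hdz.symm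
  · exact hs.false_of_adj_three hclaw hy hc hd hyc hdy.symm hdc.symm h₁.symm h₂.symm hdz.symm
  · exact hs.false_of_adj_three hclaw hc hx hd hxc.symm hdc.symm hdx.symm h₁.symm h₂.symm
      hdz.symm

theorem IsSplitType.exists_not_adj [Fintype V] (hs : IsSplitType G K I) {v : V} (hv : v ∉ K) :
    ∃ w ∈ K, ¬G.Adj v w := by
  classical
  by_contra! h
  have := hs.2 (insert v K) (by
    rw [Finset.coe_insert, isClique_insert]
    exact ⟨hs.1.isClique, fun w hw _ => h w hw⟩)
  rw [Finset.card_insert_of_notMem hv] at this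
  omega

theorem IsSplitType.isHamiltonianGraph_of_adj_of_adj [Fintype V] [DecidableEq V]
    (hs : IsSplitType G K I) (hclaw : K1rFree G 3) (hcard : 2 < Fintype.card V)
    (hdeg : ∀ v, ∃ w, G.Adj v w) {x y u : V} (hx : x ∉ K) (hy : y ∉ K) (hxy : x ≠ y)
    (hxu : G.Adj x u) (hyu : G.Adj y u) : IsHamiltonianGraph G := by
  have hxy_cover := fun w (hw : w ∈ K) => hs.1.adj_or_adj_of_adj_of_adj hclaw hx hy hxy hxu hyu hw
  obtain ⟨wx, hwx, hxwx⟩ := hs.exists_not_adj hx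
  obtain ⟨wy, hwy, hywy⟩ := hs.exists_not_adj hy
  by_cases hthird : ∃ c ∉ K, c ≠ x ∧ c ≠ y
  · obtain ⟨c, hc, hcx, hcy⟩ := hthird
    obtain ⟨z, hcz⟩ := hdeg c
    have hxc_cover := fun w (hw : w ∈ K) => hs.1.adj_or_adj_of_third hclaw hx hy hc hcx.symm
      hcy.symm hxy_cover hcz ⟨wy, hwy, hywy⟩ hw
    have hyc_cover := fun w (hw : w ∈ K) => hs.1.adj_or_adj_of_third hclaw hy hx hc hcy.symm
      hcx.symm (fun w hw => (hxy_cover w hw).symm) hcz ⟨wx, hwx, hxwx⟩ hw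
    have htwo : ∀ z ∈ K,
        G.Adj x z ∧ G.Adj y z ∨ G.Adj y z ∧ G.Adj c z ∨ G.Adj c z ∧ G.Adj x z :=
      fun z hz => by grind
    obtain ⟨wc, hwc, hcwc⟩ := hs.exists_not_adj hc
    refine isHamiltonianGraph_of_three_outside hs.1.isClique hx hy hc hxy hcx.symm hcy.symm
      (fun d hd => ?_) htwo (fun z _ ⟨h₁, h₂, h₃⟩ => ?_)
      ⟨wc, hwc, (hxc_cover wc hwc).resolve_right hcwc, (hyc_cover wc hwc).resolve_right hcwc⟩
      ⟨wx, hwx, (hxy_cover wx hwx).resolve_left hxwx, (hxc_cover wx hwx).resolve_left hxwx⟩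
      ⟨wy, hwy, (hyc_cover wy hwy).resolve_left hywy, (hxy_cover wy hwy).resolve_right hywy⟩
    · obtain ⟨z, hdz⟩ := hdeg d
      exact hs.1.eq_or_eq_or_eq hclaw hx hy hc hxy hcx.symm hcy.symm htwo hd hdz
    · exact hs.1.false_of_adj_three hclaw hx hy hc hxy hcx.symm hcy.symm h₁.symm h₂.symm h₃.symm
  · push Not at hthird
    exact isHamiltonianGraph_of_two_outside hs.1.isClique hcard hx hy hxy
      (fun v hv => or_iff_not_imp_left.2 (hthird v hv)) ⟨u, hxu, hyu⟩
      ⟨wx, hwx, (hxy_cover wx hwx).resolve_left hxwx, hxwx⟩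
      ⟨wy, hwy, (hxy_cover wy hwy).resolve_right hywy, hywy⟩

end Split

/-- A claw-free split graph of type `(K, I)` is Hamiltonian if and
only if it is 2-connected. -/
theorem hamiltonian_iff_two_connected_of_clawFree_split
    {V : Type*} [Fintype V] [DecidableEq V] (G : SimpleGraph V) (K I : Finset V)
    (hsplit : IsSplitType G K I) (hclaw : K1rFree G 3) :
    IsHamiltonianGraph G ↔ KConnected G 2 := by
  refine ⟨IsHamiltonianGraph.kConnected_two, fun hconn => ?_⟩
  have hdeg := hconn.exists_adj_adj
  by_cases hshare : ∃ x ∉ K, ∃ y ∉ K, x ≠ y ∧ ∃ u, G.Adj x u ∧ G.Adj y u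
  · obtain ⟨x, hx, y, hy, hxy, u, hxu, hyu⟩ := hshare
    refine hsplit.isHamiltonianGraph_of_adj_of_adj hclaw hconn.1 (fun v => ?_) hx hy hxy hxu hyu
    obtain ⟨w, -, -, hw, -⟩ := hdeg v
    exact ⟨w, hw⟩
  · push Not at hshare
    refine isHamiltonianGraph_of_disjoint_neighbors hsplit.1.isClique hconn.1 (fun a ha => ?_)
      hshare
    obtain ⟨u, v, huv, hau, hav⟩ := hdeg a
    exact ⟨u, hsplit.1.mem_left_of_adj ha hau, v, hsplit.1.mem_left_of_adj ha hav, huv, hau, hav⟩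
end

section
/- Let G be a connected finite simple graph and u, v, w three distinct vertices of G such that uw is not an edge of G and vw is an edge of G. Let x be the Perron vector of G. If x_u ≥ x_v, then ρ(G − vw + uw) > ρ(G). -/
open SimpleGraph

/-!
For a real symmetric matrix `A`, every eigenvalue of `specRad A • 1 - A` is nonnegative, so this
matrix is positive semidefinite. Hence `xᵀ A x ≤ ρ(A) ‖x‖²`, with equality only if
`A x = ρ(A) x`. With `A'` the adjacency matrix of the rotated graph,
`xᵀ A' x = ρ(G) + 2 x_w (x_u - x_v) ≥ ρ(G)`, so `ρ(G') ≥ ρ(G)`. Equality would make `x` an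
eigenvector of `A'` for `ρ(G)`, but `(A' x)_u = ρ(G) x_u + x_w` and `x_w > 0`.
-/

namespace Matrix

variable {n : Type*} [Fintype n] [DecidableEq n] {A : Matrix n n ℝ}

lemma specRad_eq_sSup_spectrum (A : Matrix n n ℝ) : specRad A = sSup (spectrum ℝ A) := by
  rw [specRad, ← spectrum_toLin']
  congr 1
  ext μ
  exact Module.End.hasEigenvalue_iff_mem_spectrum

lemma le_specRad_of_mem_spectrum {μ : ℝ} (hμ : μ ∈ spectrum ℝ A) : μ ≤ specRad A := by
  rw [specRad_eq_sSup_spectrum]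
  exact le_csSup A.finite_spectrum.bddAbove hμ

lemma IsHermitian.posSemidef_algebraMap_specRad_sub (hA : A.IsHermitian) :
    (algebraMap ℝ (Matrix n n ℝ) (specRad A) - A).PosSemidef := by
  have hB : (algebraMap ℝ (Matrix n n ℝ) (specRad A) - A).IsHermitian :=
    (isHermitian_diagonal _).sub hA
  refine hB.posSemidef_iff_eigenvalues_nonneg.2 fun i => ?_
  obtain ⟨c, hc, μ, hμ, hi⟩ := Set.mem_sub.1
    ((spectrum.singleton_sub_eq A (specRad A)).symm ▸ hB.eigenvalues_mem_spectrum_real i)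
  rw [Set.mem_singleton_iff] at hc
  simp only [Pi.zero_apply, ← hi, hc, sub_nonneg]
  exact le_specRad_of_mem_spectrum hμ

lemma star_dotProduct_algebraMap_sub_mulVec (c : ℝ) (x : n → ℝ) :
    star x ⬝ᵥ ((algebraMap ℝ (Matrix n n ℝ) c - A) *ᵥ x) = c * (x ⬝ᵥ x) - x ⬝ᵥ (A *ᵥ x) := by
  simp only [star_trivial, Algebra.algebraMap_eq_smul_one, sub_mulVec, smul_mulVec, one_mulVec,
    dotProduct_sub, dotProduct_smul, smul_eq_mul]

lemma IsHermitian.dotProduct_mulVec_le_specRad (hA : A.IsHermitian) (x : n → ℝ) :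
    x ⬝ᵥ (A *ᵥ x) ≤ specRad A * (x ⬝ᵥ x) := by
  have := hA.posSemidef_algebraMap_specRad_sub.dotProduct_mulVec_nonneg x
  rw [star_dotProduct_algebraMap_sub_mulVec] at this
  linarith

lemma IsHermitian.mulVec_eq_specRad_smul (hA : A.IsHermitian) {x : n → ℝ}
    (hx : specRad A * (x ⬝ᵥ x) ≤ x ⬝ᵥ (A *ᵥ x)) : A *ᵥ x = specRad A • x := by
  have hzero : star x ⬝ᵥ ((algebraMap ℝ (Matrix n n ℝ) (specRad A) - A) *ᵥ x) = 0 := by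
    rw [star_dotProduct_algebraMap_sub_mulVec]
    linarith [hA.dotProduct_mulVec_le_specRad x]
  have h := (hA.posSemidef_algebraMap_specRad_sub.dotProduct_mulVec_zero_iff x).1 hzero
  rw [Algebra.algebraMap_eq_smul_one, sub_mulVec, smul_mulVec, one_mulVec, sub_eq_zero] at h
  exact h.symm

lemma IsHermitian.lt_specRad_of_le_dotProduct_mulVec (hA : A.IsHermitian) {c : ℝ} {x : n → ℝ}
    (hle : c * (x ⬝ᵥ x) ≤ x ⬝ᵥ (A *ᵥ x)) (hne : A *ᵥ x ≠ c • x) : c < specRad A := by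
  have hx : x ≠ 0 := by rintro rfl; simp at hne
  have hxx : 0 < x ⬝ᵥ x := by simpa using dotProduct_star_self_pos_iff.2 hx
  have hc : c ≤ specRad A :=
    le_of_mul_le_mul_right (hle.trans (hA.dotProduct_mulVec_le_specRad x)) hxx
  refine hc.lt_of_ne fun h => hne ?_
  rw [h] at hle ⊢
  exact hA.mulVec_eq_specRad_smul hle

end Matrix

namespace SimpleGraph

open Matrix

variable {V : Type*} [Fintype V]

lemma adjMat_apply (G : SimpleGraph V) [DecidableRel G.Adj] (i j : V) :
    adjMat G i j = if G.Adj i j then 1 else 0 := by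
  simp only [adjMat, of_apply]
  congr

lemma isHermitian_adjMat (G : SimpleGraph V) : (adjMat G).IsHermitian := by
  classical
  ext i j
  simp [adjMat_apply, G.adj_comm]

lemma adjMat_sup_of_disjoint {G H : SimpleGraph V} (h : Disjoint G H) :
    adjMat (G ⊔ H) = adjMat G + adjMat H := by
  classical
  ext i j
  have := disjoint_left.1 h i j
  by_cases hG : G.Adj i j <;> by_cases hH : H.Adj i j <;> simp_all [adjMat_apply]

lemma adjMat_sdiff_of_le {G H : SimpleGraph V} (h : H ≤ G) :
    adjMat (G \ H) = adjMat G - adjMat H := by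
  classical
  ext i j
  have := @h i j
  by_cases hG : G.Adj i j <;> by_cases hH : H.Adj i j <;> simp_all [adjMat_apply]

lemma adjMat_sdiff_edge_sup_edge {G : SimpleGraph V} {u v w : V}
    (hnadj : ¬G.Adj u w) (hadj : G.Adj v w) :
    adjMat ((G \ edge v w) ⊔ edge u w) = adjMat G - adjMat (edge v w) + adjMat (edge u w) := by
  rw [adjMat_sup_of_disjoint ((disjoint_edge _).2 fun h => hnadj ((sdiff_adj _ _ _ _).1 h).1),
    adjMat_sdiff_of_le ((edge_le_iff _).2 (.inr hadj))]

lemma adjMat_edge [DecidableEq V] {a b : V} (hab : a ≠ b) :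
    adjMat (edge a b) = single a b 1 + single b a 1 := by
  ext i j
  simp only [adjMat_apply, edge_adj, Matrix.add_apply, single_apply]
  grind

lemma adjMat_edge_mulVec [DecidableEq V] {a b : V} (hab : a ≠ b) (x : V → ℝ) :
    adjMat (edge a b) *ᵥ x = Pi.single a (x b) + Pi.single b (x a) := by
  simp [adjMat_edge hab, add_mulVec, single_mulVec_eq, ← Pi.single_smul]

end SimpleGraph

open SimpleGraph Matrix in
theorem rho_lt_rho_rotate_general {V : Type*} [Fintype V] (G : SimpleGraph V)
    (u v w : V) (huv : u ≠ v) (huw : u ≠ w) (hvw : v ≠ w)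
    (hnadj : ¬ G.Adj u w) (hadj : G.Adj v w)
    (x : V → ℝ) (hx : IsPerronVector G x) (hxuv : x v ≤ x u) :
    rho G < rho ((G \ SimpleGraph.edge v w) ⊔ SimpleGraph.edge u w) := by
  classical
  obtain ⟨hpos, -, heig⟩ := hx
  have hmulVec : adjMat ((G \ edge v w) ⊔ edge u w) *ᵥ x =
      rho G • x - (Pi.single v (x w) + Pi.single w (x v)) +
        (Pi.single u (x w) + Pi.single w (x u)) := by
    rw [adjMat_sdiff_edge_sup_edge hnadj hadj, add_mulVec, sub_mulVec, heig,
      adjMat_edge_mulVec hvw, adjMat_edge_mulVec huw]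
  refine (isHermitian_adjMat _).lt_specRad_of_le_dotProduct_mulVec (x := x) ?_
    fun h => (hpos w).ne' ?_
  · have := mul_nonneg (hpos w).le (sub_nonneg.2 hxuv)
    simp only [hmulVec, dotProduct_add, dotProduct_sub, dotProduct_smul, dotProduct_single,
      smul_eq_mul]
    linarith
  · simpa [hmulVec, huv, huw] using congrFun h u

/-- rotating an edge `vw` to `uw` strictly increases the spectral
radius when the Perron vector satisfies `x_u ≥ x_v`. -/
theorem rho_lt_rho_rotate {V : Type*} [Fintype V] (G : SimpleGraph V)
    (hG : G.Connected) (u v w : V) (huv : u ≠ v) (huw : u ≠ w) (hvw : v ≠ w)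
    (hnadj : ¬ G.Adj u w) (hadj : G.Adj v w)
    (x : V → ℝ) (hx : IsPerronVector G x) (hxuv : x v ≤ x u) :
    rho G < rho ((G \ SimpleGraph.edge v w) ⊔ SimpleGraph.edge u w) :=
  rho_lt_rho_rotate_general G u v w huv huw hvw hnadj hadj x hx hxuv
end
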